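/- arXiv:0807.2769 — 3 statements merged into one kernel-verified Lean document; each statement's English description precedes it below -/
import Mathlib

section
/- Let G(y) be a nonempty convex closed bounded subset of a Hilbert space H and suppose x̂ ∈ G(y) satisfies sup_{x ∈ G(y)} |⟨ℓ, x̂ − x⟩| = inf_{φ ∈ G(y)} sup_{x ∈ G(y)} |⟨ℓ, φ − x⟩| for every unit vector ℓ. Then sup_{x ∈ G(y)} ‖x̂ − x‖ = inf_{φ ∈ G(y)} sup_{x ∈ G(y)} ‖φ − x‖ = sup_{‖ℓ‖=1} ρ̂(ℓ), where ρ̂(ℓ) := inf_{φ ∈ G(y)} sup_{x ∈ G(y)} |⟨ℓ, φ − x⟩|. In other words, the directionwise minimax center is also the Chebyshev center in norm, and the Chebyshev radius equals the supremum of directional minimax errors. -/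
open scoped RealInnerProductSpace

theorem stmt8 {H : Type*} [NormedAddCommGroup H] [InnerProductSpace ℝ H] [CompleteSpace H]
    (G : Set H) (hne : G.Nonempty) (hconv : Convex ℝ G) (hcl : IsClosed G)
    (hbdd : Bornology.IsBounded G) (xh : H) (hxh : xh ∈ G)
    (hcenter : ∀ ℓ : H, ‖ℓ‖ = 1 →
      sSup ((fun x => |⟪ℓ, xh - x⟫|) '' G)
        = sInf ((fun φ => sSup ((fun x => |⟪ℓ, φ - x⟫|) '' G)) '' G)) :
    sSup ((fun x => ‖xh - x‖) '' G)
        = sInf ((fun φ => sSup ((fun x => ‖φ - x‖) '' G)) '' G) ∧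
    sSup ((fun x => ‖xh - x‖) '' G)
        = sSup ((fun ℓ : H => sInf ((fun φ => sSup ((fun x => |⟪ℓ, φ - x⟫|) '' G)) '' G))
            '' {ℓ : H | ‖ℓ‖ = 1}) := by
  obtain ⟨C, hC⟩ := hbdd.exists_norm_le
  -- notation
  set r : H → ℝ := fun φ => sSup ((fun x => ‖φ - x‖) '' G) with hr_def
  set ρ : H → H → ℝ := fun ℓ φ => sSup ((fun x => |⟪ℓ, φ - x⟫|) '' G) with hρ_def
  set ρh : H → ℝ := fun ℓ => sInf ((fun φ => ρ ℓ φ) '' G) with hρh_def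
  set S : ℝ := sSup ((fun ℓ => ρh ℓ) '' {ℓ : H | ‖ℓ‖ = 1}) with hS_def
  have hbound : ∀ φ ∈ G, ∀ x ∈ G, ‖φ - x‖ ≤ C + C := by
    intro φ hφ x hx
    calc ‖φ - x‖ ≤ ‖φ‖ + ‖x‖ := norm_sub_le _ _
      _ ≤ C + C := add_le_add (hC φ hφ) (hC x hx)
  have hbddA : ∀ φ ∈ G, BddAbove ((fun x => ‖φ - x‖) '' G) := by
    intro φ hφ
    exact ⟨C + C, by rintro _ ⟨x, hx, rfl⟩; exact hbound φ hφ x hx⟩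
  have hbddI : ∀ (ℓ : H), ‖ℓ‖ = 1 → ∀ φ ∈ G, BddAbove ((fun x => |⟪ℓ, φ - x⟫|) '' G) := by
    intro ℓ hℓ φ hφ
    refine ⟨C + C, ?_⟩
    rintro _ ⟨x, hx, rfl⟩
    calc |⟪ℓ, φ - x⟫| ≤ ‖ℓ‖ * ‖φ - x‖ := abs_real_inner_le_norm _ _
      _ = ‖φ - x‖ := by rw [hℓ, one_mul]
      _ ≤ C + C := hbound φ hφ x hx
  have hρ_le_r : ∀ (ℓ : H), ‖ℓ‖ = 1 → ∀ φ ∈ G, ρ ℓ φ ≤ r φ := by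
    intro ℓ hℓ φ hφ
    apply csSup_le (hne.image _)
    rintro _ ⟨x, hx, rfl⟩
    calc |⟪ℓ, φ - x⟫| ≤ ‖ℓ‖ * ‖φ - x‖ := abs_real_inner_le_norm _ _
      _ = ‖φ - x‖ := by rw [hℓ, one_mul]
      _ ≤ r φ := le_csSup (hbddA φ hφ) ⟨x, hx, rfl⟩
  have hρh_nonneg : ∀ ℓ : H, 0 ≤ ρh ℓ := by
    intro ℓ
    apply Real.sInf_nonneg
    rintro _ ⟨φ, hφ, rfl⟩
    apply Real.sSup_nonneg
    rintro _ ⟨x, hx, rfl⟩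
    exact abs_nonneg _
  have hbddBelow : ∀ ℓ : H, BddBelow ((fun φ => ρ ℓ φ) '' G) := by
    intro ℓ
    refine ⟨0, ?_⟩
    rintro _ ⟨φ, hφ, rfl⟩
    exact Real.sSup_nonneg (by rintro _ ⟨x, hx, rfl⟩; exact abs_nonneg _)
  -- S is bounded above
  have hS_bddAbove : BddAbove ((fun ℓ => ρh ℓ) '' {ℓ : H | ‖ℓ‖ = 1}) := by
    refine ⟨C + C, ?_⟩
    rintro _ ⟨ℓ, hℓ, rfl⟩
    calc ρh ℓ ≤ ρ ℓ xh := csInf_le (hbddBelow ℓ) ⟨xh, hxh, rfl⟩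
      _ ≤ r xh := hρ_le_r ℓ hℓ xh hxh
      _ ≤ C + C := csSup_le (hne.image _) (by rintro _ ⟨x, hx, rfl⟩; exact hbound xh hxh x hx)
  have hS_nonneg : 0 ≤ S := by
    by_cases h : ({ℓ : H | ‖ℓ‖ = 1}).Nonempty
    · obtain ⟨ℓ0, hℓ0⟩ := h
      exact le_trans (hρh_nonneg ℓ0) (le_csSup hS_bddAbove ⟨ℓ0, hℓ0, rfl⟩)
    · rw [hS_def, Set.not_nonempty_iff_eq_empty.mp h, Set.image_empty, Real.sSup_empty]
  -- Inequality 1 : r xh ≤ S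
  have h1 : r xh ≤ S := by
    apply csSup_le (hne.image _)
    rintro _ ⟨x, hx, rfl⟩
    show ‖xh - x‖ ≤ S
    by_cases hv : xh - x = 0
    · rw [hv, norm_zero]; exact hS_nonneg
    · set ℓ : H := ‖xh - x‖⁻¹ • (xh - x) with hℓ_def
      have hℓ : ‖ℓ‖ = 1 := by
        rw [hℓ_def, norm_smul, norm_inv, norm_norm,
          inv_mul_cancel₀ (norm_ne_zero_iff.mpr hv)]
      have hinner : |⟪ℓ, xh - x⟫| = ‖xh - x‖ := by
        rw [hℓ_def, real_inner_smul_left, real_inner_self_eq_norm_mul_norm]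
        rw [abs_of_nonneg (by positivity)]
        field_simp
      calc ‖xh - x‖ = |⟪ℓ, xh - x⟫| := hinner.symm
        _ ≤ ρ ℓ xh := le_csSup (hbddI ℓ hℓ xh hxh) ⟨x, hx, rfl⟩
        _ = ρh ℓ := hcenter ℓ hℓ
        _ ≤ S := le_csSup hS_bddAbove ⟨ℓ, hℓ, rfl⟩
  -- Inequality 2 : S ≤ sInf (r '' G)
  have hInf_nonneg : 0 ≤ sInf ((fun φ => r φ) '' G) := by
    apply Real.sInf_nonneg
    rintro _ ⟨φ, hφ, rfl⟩
    exact Real.sSup_nonneg (by rintro _ ⟨x, hx, rfl⟩; exact norm_nonneg _)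
  have h2 : S ≤ sInf ((fun φ => r φ) '' G) := by
    apply Real.sSup_le _ hInf_nonneg
    rintro _ ⟨ℓ, hℓ, rfl⟩
    apply le_csInf (hne.image _)
    rintro _ ⟨φ, hφ, rfl⟩
    calc ρh ℓ ≤ ρ ℓ φ := csInf_le (hbddBelow ℓ) ⟨φ, hφ, rfl⟩
      _ ≤ r φ := hρ_le_r ℓ hℓ φ hφ
  -- Inequality 3 : sInf (r '' G) ≤ r xh
  have h3 : sInf ((fun φ => r φ) '' G) ≤ r xh := by
    refine csInf_le ⟨0, ?_⟩ ⟨xh, hxh, rfl⟩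
    rintro _ ⟨φ, hφ, rfl⟩
    exact Real.sSup_nonneg (by rintro _ ⟨x, hx, rfl⟩; exact norm_nonneg _)
  constructor
  · linarith
  · linarith
end

section
/- Let P ∈ ℝ^{n×n} be symmetric positive semidefinite with Moore–Penrose pseudoinverse P⁺, and let X̃ = {x ∈ ℝⁿ : ⟨Px, x⟩ ≤ 1}. Then for ℓ ∈ ℝⁿ, the support function satisfies c(X̃, ℓ) = ⟨P⁺ℓ, ℓ⟩^{1/2} if P⁺Pℓ = ℓ (i.e. ℓ ∈ range P), and c(X̃, ℓ) = +∞ otherwise. -/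
/-!
Write `S = {x | xᵀPx ≤ 1}`. If `ℓ = Pu`, then `⟨ℓ, x⟩ = uᵀPx`, and Cauchy–Schwarz for the
semidefinite form `P` bounds it on `S` by `√(uᵀPu)`, a value attained at `x = u / √(uᵀPu)`.
When `P⁺Pℓ = ℓ`, take `u = P⁺ᵀℓ`: then `Pu = (P⁺P)ᵀℓ = ℓ` and `uᵀPu = ⟨P⁺ℓ, ℓ⟩`.
Otherwise `v = ℓ - P⁺Pℓ` is a nonzero vector of `ker P` with `⟨ℓ, v⟩ = ‖v‖² > 0`,
and the whole line `ℝv` lies in `S`.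
-/

open Matrix

namespace Matrix

variable {ι : Type*} {P : Matrix ι ι ℝ}

theorem PosSemidef.transpose_eq (hP : P.PosSemidef) : Pᵀ = P :=
  (isHermitian_iff_isSymm.mp hP.isHermitian).eq

variable [Fintype ι]

theorem PosSemidef.mulVec_dotProduct (hP : P.PosSemidef) (a b : ι → ℝ) :
    (P *ᵥ a) ⬝ᵥ b = a ⬝ᵥ (P *ᵥ b) := by
  rw [dotProduct_mulVec, ← mulVec_transpose, hP.transpose_eq, dotProduct_comm]

theorem PosSemidef.dotProduct_mulVec_sq_le (hP : P.PosSemidef) (a b : ι → ℝ) :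
    (a ⬝ᵥ (P *ᵥ b)) ^ 2 ≤ (a ⬝ᵥ (P *ᵥ a)) * (b ⬝ᵥ (P *ᵥ b)) := by
  have hsymm : b ⬝ᵥ (P *ᵥ a) = a ⬝ᵥ (P *ᵥ b) := by
    rw [← hP.mulVec_dotProduct, dotProduct_comm]
  classical
  have := (toBilin' P).apply_mul_apply_le_of_forall_zero_le
    (fun x => by simpa [toBilin'_apply'] using hP.dotProduct_mulVec_nonneg x) a b
  simpa only [toBilin'_apply', hsymm, ← sq] using this

theorem PosSemidef.isGreatest_image_dotProduct (hP : P.PosSemidef) (u : ι → ℝ) :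
    IsGreatest ((fun x => (P *ᵥ u) ⬝ᵥ x) '' {x | x ⬝ᵥ (P *ᵥ x) ≤ 1})
      (√(u ⬝ᵥ (P *ᵥ u))) := by
  set s := √(u ⬝ᵥ (P *ᵥ u))
  have hs : u ⬝ᵥ (P *ᵥ u) = s ^ 2 :=
    (Real.sq_sqrt (by simpa using hP.dotProduct_mulVec_nonneg u)).symm
  constructor
  · -- `0⁻¹ = 0`, so the witness `s⁻¹ • u` needs no case split on `s`
    refine ⟨s⁻¹ • u, ?_, ?_⟩
    · have hle : s⁻¹ * s ≤ 1 := by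
        rcases eq_or_ne s 0 with h | h <;> simp [h]
      simpa [mulVec_smul, hs, sq, ← mul_assoc, inv_mul_mul_self] using hle
    · dsimp only
      rw [hP.mulVec_dotProduct, mulVec_smul, dotProduct_smul, hs, smul_eq_mul, sq, ← mul_assoc,
        inv_mul_mul_self]
  · rintro _ ⟨x, hx, rfl⟩
    refine (le_abs_self _).trans (Real.abs_le_sqrt ?_)
    calc ((P *ᵥ u) ⬝ᵥ x) ^ 2 ≤ (u ⬝ᵥ (P *ᵥ u)) * (x ⬝ᵥ (P *ᵥ x)) :=
          hP.mulVec_dotProduct u x ▸ hP.dotProduct_mulVec_sq_le u x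
      _ ≤ u ⬝ᵥ (P *ᵥ u) :=
          mul_le_of_le_one_right (by simpa using hP.dotProduct_mulVec_nonneg u) hx

theorem not_bddAbove_image_dotProduct_of_mulVec_eq_zero {ℓ v : ι → ℝ} (hv : P *ᵥ v = 0)
    (hℓv : ℓ ⬝ᵥ v ≠ 0) : ¬ BddAbove ((fun x => ℓ ⬝ᵥ x) '' {x | x ⬝ᵥ (P *ᵥ x) ≤ 1}) := by
  rintro ⟨b, hb⟩
  have hmem : b + 1 ∈ (fun x => ℓ ⬝ᵥ x) '' {x | x ⬝ᵥ (P *ᵥ x) ≤ 1} :=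
    ⟨((b + 1) / (ℓ ⬝ᵥ v)) • v, by simp [mulVec_smul, hv],
      by simp [dotProduct_smul, div_mul_cancel₀ _ hℓv]⟩
  linarith [hb hmem]

variable {Q : Matrix ι ι ℝ}

theorem mulVec_self_sub_mul_mulVec_eq_zero (hPQP : P * Q * P = P) (ℓ : ι → ℝ) :
    P *ᵥ (ℓ - (Q * P) *ᵥ ℓ) = 0 := by
  rw [mulVec_sub, mulVec_mulVec, ← Matrix.mul_assoc, hPQP, sub_self]

theorem dotProduct_self_sub_mul_mulVec_ne_zero (hPQP : P * Q * P = P) (hQP : (Q * P)ᵀ = Q * P)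
    {ℓ : ι → ℝ} (hℓ : (Q * P) *ᵥ ℓ ≠ ℓ) : ℓ ⬝ᵥ (ℓ - (Q * P) *ᵥ ℓ) ≠ 0 := by
  set v := ℓ - (Q * P) *ᵥ ℓ with hv_def
  have hQPv : (Q * P) *ᵥ v = 0 := by
    rw [← mulVec_mulVec, mulVec_self_sub_mul_mulVec_eq_zero hPQP, mulVec_zero]
  have hℓv : ℓ ⬝ᵥ v = v ⬝ᵥ v := by
    have horth : ((Q * P) *ᵥ ℓ) ⬝ᵥ v = 0 := by
      rw [dotProduct_comm, dotProduct_mulVec, ← mulVec_transpose, hQP, hQPv, zero_dotProduct]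
    rw [hv_def, sub_dotProduct _ _ v, horth, sub_zero]
  rw [hℓv]
  exact dotProduct_self_eq_zero.not.mpr (sub_ne_zero.mpr hℓ.symm)

end Matrix

theorem stmt10_general {n : ℕ} (P Pp : Matrix (Fin n) (Fin n) ℝ) (hP : P.PosSemidef)
    (pen1 : P * Pp * P = P)
    (pen4 : (Pp * P)ᵀ = Pp * P)
    (ℓ : Fin n → ℝ) :
    ((Pp * P) *ᵥ ℓ = ℓ →
      BddAbove ((fun x => ℓ ⬝ᵥ x) '' {x : Fin n → ℝ | x ⬝ᵥ (P *ᵥ x) ≤ 1}) ∧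
      sSup ((fun x => ℓ ⬝ᵥ x) '' {x : Fin n → ℝ | x ⬝ᵥ (P *ᵥ x) ≤ 1})
        = Real.sqrt (ℓ ⬝ᵥ (Pp *ᵥ ℓ))) ∧
    ((Pp * P) *ᵥ ℓ ≠ ℓ →
      ¬ BddAbove ((fun x => ℓ ⬝ᵥ x) '' {x : Fin n → ℝ | x ⬝ᵥ (P *ᵥ x) ≤ 1})) := by
  refine ⟨fun hℓ => ?_, fun hℓ => ?_⟩
  · have hPu : P *ᵥ (Ppᵀ *ᵥ ℓ) = ℓ := by
      rw [mulVec_mulVec, ← hP.transpose_eq, ← transpose_mul, pen4, hℓ]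
    have hq : (Ppᵀ *ᵥ ℓ) ⬝ᵥ ℓ = ℓ ⬝ᵥ (Pp *ᵥ ℓ) := by
      rw [mulVec_transpose, ← dotProduct_mulVec]
    have hmax := hP.isGreatest_image_dotProduct (Ppᵀ *ᵥ ℓ)
    rw [hPu, hq] at hmax
    exact ⟨hmax.bddAbove, hmax.csSup_eq⟩
  · exact not_bddAbove_image_dotProduct_of_mulVec_eq_zero
      (mulVec_self_sub_mul_mulVec_eq_zero pen1 ℓ)
      (dotProduct_self_sub_mul_mulVec_ne_zero pen1 pen4 hℓ)

theorem stmt10 {n : ℕ} (P Pp : Matrix (Fin n) (Fin n) ℝ) (hP : P.PosSemidef)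
    (pen1 : P * Pp * P = P) (pen2 : Pp * P * Pp = Pp)
    (pen3 : (P * Pp)ᵀ = P * Pp) (pen4 : (Pp * P)ᵀ = Pp * P)
    (ℓ : Fin n → ℝ) :
    ((Pp * P) *ᵥ ℓ = ℓ →
      BddAbove ((fun x => ℓ ⬝ᵥ x) '' {x : Fin n → ℝ | x ⬝ᵥ (P *ᵥ x) ≤ 1}) ∧
      sSup ((fun x => ℓ ⬝ᵥ x) '' {x : Fin n → ℝ | x ⬝ᵥ (P *ᵥ x) ≤ 1})
        = Real.sqrt (ℓ ⬝ᵥ (Pp *ᵥ ℓ))) ∧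
    ((Pp * P) *ᵥ ℓ ≠ ℓ →
      ¬ BddAbove ((fun x => ℓ ⬝ᵥ x) '' {x : Fin n → ℝ | x ⬝ᵥ (P *ᵥ x) ≤ 1})) :=
  stmt10_general P Pp hP pen1 pen4 ℓ
end

section
/- Under the rank condition rank[F_k; H_k] = n for all k (stacked (m+p)×n matrix has full column rank) and with R_k = E, S_k = E, the matrices P_k defined by P_0 = F_0'F_0 + H_0'H_0 and P_k = H_k'H_k + F_k'[E − C_{k-1}(P_{k-1} + C_{k-1}'C_{k-1})^{-1}C_{k-1}']F_k are symmetric positive definite (hence invertible), and P_k^{-1} = P_{k|k} where P_{0|0}^{-1} = F_0'F_0 + H_0'H_0, A_k^{-1} = E + C_k P_{k|k} C_k', and P_{k|k}^{-1} = F_k' A_{k-1} F_k + H_k' H_k. That is, the minimax recursion for P_k coincides with the Kalman-type information matrix recursion for descriptor systems. -/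
/-!
By the Woodbury identity `(E + C P⁻¹ Cᵀ)⁻¹ = E - C (P + Cᵀ C)⁻¹ Cᵀ`, the minimax recursion reads
`P_{k+1} = Hᵀ H + Fᵀ (E + C P_k⁻¹ Cᵀ)⁻¹ F`, which is the information recursion once
`P_k⁻¹ = P_{k|k}`; so the two agree by induction on `k`. Positive definiteness propagates along
the way: `E + C P_k⁻¹ Cᵀ` is positive definite with `P_k`, and `Hᵀ H + Fᵀ M F` is positive
definite for positive definite `M`, since full column rank of `[F; H]` means that `F x` and
`H x` never vanish together.
-/

open Matrix

namespace Matrix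

variable {l m n R : Type*} [Fintype n]

theorem mulVec_injective_of_rank_eq_card [Field R] (A : Matrix m n R)
    (hA : A.rank = Fintype.card n) : Function.Injective A.mulVec := by
  have hdim : Module.finrank R (n → R) = Module.finrank R (LinearMap.range A.mulVecLin) := by
    rw [Module.finrank_fintype_fun_eq_card, ← hA, rank]
  exact A.mulVecLin.injective_rangeRestrict_iff.mp <|
    (LinearMap.injective_iff_surjective_of_finrank_eq_finrank hdim).mpr
      (LinearMap.surjective_rangeRestrict _)

theorem nonsing_inv_eq_of_eq_nonsing_inv [DecidableEq n] [CommRing R] {A B : Matrix n n R}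
    (h : A = B⁻¹) (hA : IsUnit A) : A⁻¹ = B := by
  subst h
  exact nonsing_inv_nonsing_inv B ((isUnit_iff_isUnit_det B).mp (isUnit_nonsing_inv_iff.mp hA))

theorem inv_one_add_mul_nonsing_inv_mul [Fintype m] [DecidableEq m] [DecidableEq n] [CommRing R]
    (C : Matrix m n R) (D : Matrix n m R) {P : Matrix n n R} (hP : IsUnit P)
    (hPDC : IsUnit (P + D * C)) :
    (1 + C * P⁻¹ * D)⁻¹ = 1 - C * (P + D * C)⁻¹ * D := by
  have hinv : (P⁻¹)⁻¹ = P := nonsing_inv_nonsing_inv P ((isUnit_iff_isUnit_det P).mp hP)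
  have := add_mul_mul_inv_eq_sub 1 C P⁻¹ D isUnit_one (isUnit_nonsing_inv_iff.mpr hP)
    (by rwa [hinv, inv_one, Matrix.mul_one])
  simpa only [hinv, inv_one, Matrix.mul_one, Matrix.one_mul] using this

theorem posSemidef_transpose_mul_self [Fintype m] (A : Matrix m n ℝ) : (Aᵀ * A).PosSemidef := by
  simpa only [conjTranspose_eq_transpose_of_trivial] using posSemidef_conjTranspose_mul_self A

theorem posDef_transpose_mul_add_transpose_mul_mul [Fintype l] [Fintype m]
    (F : Matrix m n ℝ) (H : Matrix l n ℝ) {M : Matrix m m ℝ} (hM : M.PosDef)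
    (hFH : Function.Injective (fromRows F H).mulVec) :
    (Hᵀ * H + Fᵀ * M * F).PosDef := by
  have hHH : (Hᵀ * H).PosSemidef := posSemidef_transpose_mul_self H
  have hFMF : (Fᵀ * M * F).PosSemidef := by
    simpa only [conjTranspose_eq_transpose_of_trivial] using
      hM.posSemidef.conjTranspose_mul_mul_same F
  refine PosDef.of_dotProduct_mulVec_pos (hHH.isHermitian.add hFMF.isHermitian) fun x hx => ?_
  have hFH_ne : F *ᵥ x ≠ 0 ∨ H *ᵥ x ≠ 0 := by
    by_contra! h
    exact hx (hFH (by rw [fromRows_mulVec, h.1, h.2, mulVec_zero, Sum.elim_zero_zero]))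
  have hH_eq : star x ⬝ᵥ ((Hᵀ * H) *ᵥ x) = (H *ᵥ x) ⬝ᵥ (H *ᵥ x) := by
    rw [star_trivial, ← mulVec_mulVec, dotProduct_mulVec, vecMul_transpose]
  have hF_eq : star x ⬝ᵥ ((Fᵀ * M * F) *ᵥ x) = (F *ᵥ x) ⬝ᵥ (M *ᵥ (F *ᵥ x)) := by
    rw [star_trivial, Matrix.mul_assoc, ← mulVec_mulVec, dotProduct_mulVec, vecMul_transpose,
      ← mulVec_mulVec]
  rw [add_mulVec, dotProduct_add, hH_eq, hF_eq]
  rcases hFH_ne with hF | hH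
  · exact add_pos_of_nonneg_of_pos (dotProduct_self_star_nonneg _)
      (by simpa only [star_trivial] using hM.dotProduct_mulVec_pos hF)
  · exact add_pos_of_pos_of_nonneg
      (by simpa only [star_trivial] using dotProduct_star_self_pos_iff.mpr hH)
      (by simpa only [star_trivial] using hM.posSemidef.dotProduct_mulVec_nonneg (F *ᵥ x))

theorem PosDef.one_add_mul_inv_mul_transpose [Fintype m] [DecidableEq m] [DecidableEq n]
    {P : Matrix n n ℝ} (hP : P.PosDef) (C : Matrix m n ℝ) : (1 + C * P⁻¹ * Cᵀ).PosDef := by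
  simpa only [conjTranspose_eq_transpose_of_trivial] using
    PosDef.one.add_posSemidef (hP.inv.posSemidef.mul_mul_conjTranspose_same C)

end Matrix

theorem stmt16 {m n q : ℕ}
    (F C : ℕ → Matrix (Fin m) (Fin n) ℝ) (Hm : ℕ → Matrix (Fin q) (Fin n) ℝ)
    (hrank : ∀ k, (Matrix.fromRows (F k) (Hm k)).rank = n)
    (P Pkk : ℕ → Matrix (Fin n) (Fin n) ℝ)
    (hP0 : P 0 = (F 0)ᵀ * F 0 + (Hm 0)ᵀ * Hm 0)
    (hPk : ∀ k, P (k + 1) = (Hm (k + 1))ᵀ * Hm (k + 1)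
      + (F (k + 1))ᵀ * (1 - C k * (P k + (C k)ᵀ * C k)⁻¹ * (C k)ᵀ) * F (k + 1))
    (hQ0 : (Pkk 0)⁻¹ = (F 0)ᵀ * F 0 + (Hm 0)ᵀ * Hm 0)
    (hQk : ∀ k, (Pkk (k + 1))⁻¹
      = (F (k + 1))ᵀ * (1 + C k * Pkk k * (C k)ᵀ)⁻¹ * F (k + 1)
        + (Hm (k + 1))ᵀ * Hm (k + 1)) :
    ∀ k, (P k).PosDef ∧ (P k)⁻¹ = Pkk k := by
  have hinj : ∀ k, Function.Injective (fromRows (F k) (Hm k)).mulVec := fun k =>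
    mulVec_injective_of_rank_eq_card _ ((hrank k).trans (Fintype.card_fin n).symm)
  intro k
  induction k with
  | zero =>
    have hpos : (P 0).PosDef := by
      rw [hP0, add_comm]
      simpa only [Matrix.mul_one] using
        posDef_transpose_mul_add_transpose_mul_mul (F 0) (Hm 0) PosDef.one (hinj 0)
    exact ⟨hpos, nonsing_inv_eq_of_eq_nonsing_inv (hP0.trans hQ0.symm) hpos.isUnit⟩
  | succ k ih =>
    obtain ⟨hpos, hinv⟩ := ih
    have hP : P (k + 1) = (Hm (k + 1))ᵀ * Hm (k + 1)
        + (F (k + 1))ᵀ * (1 + C k * (P k)⁻¹ * (C k)ᵀ)⁻¹ * F (k + 1) := by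
      rw [hPk, inv_one_add_mul_nonsing_inv_mul _ _ hpos.isUnit
        (hpos.add_posSemidef (posSemidef_transpose_mul_self (C k))).isUnit]
    have hpos' : (P (k + 1)).PosDef := hP ▸ posDef_transpose_mul_add_transpose_mul_mul _ _
      (hpos.one_add_mul_inv_mul_transpose (C k)).inv (hinj (k + 1))
    refine ⟨hpos', nonsing_inv_eq_of_eq_nonsing_inv ?_ hpos'.isUnit⟩
    rw [hP, hQk, hinv, add_comm]
end
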